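/- arXiv:1012.2737 — 5 statements merged into one kernel-verified Lean document; each statement's English description precedes it below -/
import Mathlib

section
/- Let p ∈ (1,∞) and α > −p, and define φ(t) = t^p · (log(e+t))^α for t > 0. Then there exists a constant C (depending only on p and α) such that for all t > 0: ∫₀^t φ(s)·s^(−2) ds ≤ C·φ(t)/t. -/
open Real MeasureTheory

private lemma log_ge_one (x : ℝ) (hx : 0 ≤ x) : 1 ≤ Real.log (Real.exp 1 + x) := by
  calc (1:ℝ) = Real.log (Real.exp 1) := (Real.log_exp 1).symm
    _ ≤ _ := Real.log_le_log (Real.exp_pos 1) (by linarith)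

private lemma ptwise (p α : ℝ) (hp : 1 < p) :
    ∃ K : ℝ, 0 < K ∧ ∀ t s : ℝ, 0 < s → s ≤ t →
      (Real.log (Real.exp 1 + s)) ^ α ≤
        K * (t / s) ^ ((p-1)/2) * (Real.log (Real.exp 1 + t)) ^ α := by
  rcases le_or_gt 0 α with hα0 | hα0
  · refine ⟨1, one_pos, fun t s hs hst => ?_⟩
    have ht : 0 < t := hs.trans_le hst
    have hLs : (1:ℝ) ≤ Real.log (Real.exp 1 + s) := log_ge_one s hs.le
    have hLt : (1:ℝ) ≤ Real.log (Real.exp 1 + t) := log_ge_one t ht.le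
    have h1 : (Real.log (Real.exp 1 + s)) ^ α ≤ (Real.log (Real.exp 1 + t)) ^ α :=
      Real.rpow_le_rpow (by linarith) (Real.log_le_log (by positivity) (by linarith)) hα0
    have h2 : (1:ℝ) ≤ (t/s) ^ ((p-1)/2) :=
      Real.one_le_rpow (by rw [le_div_iff₀ hs]; linarith) (by linarith)
    have h3 : 0 ≤ (Real.log (Real.exp 1 + t)) ^ α := Real.rpow_nonneg (by linarith) _
    nlinarith
  · set δ : ℝ := (p-1)/(2*(-α)) with hδdef
    have hδ : 0 < δ := by apply div_pos <;> nlinarith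
    have hα' : α ≠ 0 := ne_of_lt hα0
    have hδα : δ * (-α) = (p-1)/2 := by
      rw [hδdef]; field_simp
    refine ⟨(1 + 1/δ) ^ (-α), Real.rpow_pos_of_pos (by positivity) _, fun t s hs hst => ?_⟩
    have ht : 0 < t := hs.trans_le hst
    have hLs : (1:ℝ) ≤ Real.log (Real.exp 1 + s) := log_ge_one s hs.le
    have hLt : (1:ℝ) ≤ Real.log (Real.exp 1 + t) := log_ge_one t ht.le
    set r := t / s with hr
    have hr1 : 1 ≤ r := by rw [hr, le_div_iff₀ hs]; linarith
    have hrpos : 0 < r := lt_of_lt_of_le one_pos hr1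
    have hrδ1 : 1 ≤ r ^ δ := Real.one_le_rpow hr1 hδ.le
    have h1 : Real.log (Real.exp 1 + t) ≤ Real.log (Real.exp 1 + s) + Real.log r := by
      rw [← Real.log_mul (by positivity) (ne_of_gt hrpos)]
      apply Real.log_le_log (by positivity)
      have hsr : s * r = t := by rw [hr]; field_simp
      nlinarith [Real.exp_pos 1]
    have h2 : Real.log r ≤ r ^ δ / δ := by
      have h2' := Real.log_le_sub_one_of_pos (Real.rpow_pos_of_pos hrpos δ)
      rw [Real.log_rpow hrpos] at h2'
      rw [le_div_iff₀ hδ]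
      nlinarith
    have hδ' : (0:ℝ) < 1/δ := by positivity
    have hrδ0 : (0:ℝ) ≤ r ^ δ := by positivity
    have h3 : Real.log (Real.exp 1 + t) ≤
        Real.log (Real.exp 1 + s) * ((1 + 1/δ) * r ^ δ) := by
      have hA : Real.log (Real.exp 1 + s) ≤ Real.log (Real.exp 1 + s) * r ^ δ :=
        le_mul_of_one_le_right (by linarith) hrδ1
      have hB : r ^ δ / δ ≤ Real.log (Real.exp 1 + s) * (1/δ) * r ^ δ := by
        rw [div_eq_mul_inv, ← one_div]
        nlinarith [mul_nonneg (mul_nonneg (by linarith : (0:ℝ) ≤ Real.log (Real.exp 1 + s) - 1) hδ'.le) hrδ0]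
      calc Real.log (Real.exp 1 + t) ≤ Real.log (Real.exp 1 + s) + Real.log r := h1
        _ ≤ Real.log (Real.exp 1 + s) + r ^ δ / δ := by linarith
        _ ≤ Real.log (Real.exp 1 + s) * r ^ δ + Real.log (Real.exp 1 + s) * (1/δ) * r ^ δ := by
            linarith
        _ = Real.log (Real.exp 1 + s) * ((1 + 1/δ) * r ^ δ) := by ring
    have hNα : (0:ℝ) ≤ -α := by linarith
    have h4 : (Real.log (Real.exp 1 + t)) ^ (-α) ≤
        (Real.log (Real.exp 1 + s)) ^ (-α) * ((1 + 1/δ) ^ (-α) * r ^ ((p-1)/2)) := by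
      have h5 := Real.rpow_le_rpow (by linarith : (0:ℝ) ≤ Real.log (Real.exp 1 + t)) h3 hNα
      rwa [Real.mul_rpow (by linarith) (by positivity),
        Real.mul_rpow (by positivity) (by positivity),
        ← Real.rpow_mul hrpos.le, hδα] at h5
    have hLs0 : (0:ℝ) < Real.log (Real.exp 1 + s) := by linarith
    have hLt0 : (0:ℝ) < Real.log (Real.exp 1 + t) := by linarith
    have ha : (0:ℝ) < (Real.log (Real.exp 1 + s)) ^ (-α) := Real.rpow_pos_of_pos hLs0 _
    have hb : (0:ℝ) < (Real.log (Real.exp 1 + t)) ^ (-α) := Real.rpow_pos_of_pos hLt0 _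
    have ea : (Real.log (Real.exp 1 + s)) ^ α = ((Real.log (Real.exp 1 + s)) ^ (-α))⁻¹ := by
      rw [← Real.rpow_neg hLs0.le, neg_neg]
    have eb : (Real.log (Real.exp 1 + t)) ^ α = ((Real.log (Real.exp 1 + t)) ^ (-α))⁻¹ := by
      rw [← Real.rpow_neg hLt0.le, neg_neg]
    rw [ea, eb,
      show (((Real.log (Real.exp 1 + s)) ^ (-α))⁻¹ : ℝ) = 1/((Real.log (Real.exp 1 + s)) ^ (-α))
        from (one_div _).symm,
      show ((1 + 1/δ) ^ (-α) * r ^ ((p-1)/2) * ((Real.log (Real.exp 1 + t)) ^ (-α))⁻¹ : ℝ)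
        = ((1 + 1/δ) ^ (-α) * r ^ ((p-1)/2)) / ((Real.log (Real.exp 1 + t)) ^ (-α))
        from (div_eq_mul_inv _ _).symm,
      div_le_div_iff₀ ha hb]
    nlinarith [h4]

theorem orlicz_integral_estimate (p α : ℝ) (hp : 1 < p) (hα : -p < α) :
    ∃ C : ℝ, 0 < C ∧ ∀ t : ℝ, 0 < t →
      ∫ s in (0 : ℝ)..t, (s ^ p * (Real.log (Real.exp 1 + s)) ^ α) / s ^ 2 ≤
        C * (t ^ p * (Real.log (Real.exp 1 + t)) ^ α) / t := by
  obtain ⟨K, hK0, hKle⟩ := ptwise p α hp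
  set e := (p-1)/2 with he
  have hep : 0 < e := by rw [he]; linarith
  have hp1' : (0:ℝ) < p - 1 := by linarith
  refine ⟨K * (2/(p-1)), by positivity, fun t ht => ?_⟩
  have hLt : (1:ℝ) ≤ Real.log (Real.exp 1 + t) := log_ge_one t ht.le
  have hLt0 : (0:ℝ) ≤ (Real.log (Real.exp 1 + t)) ^ α := Real.rpow_nonneg (by linarith) _
  have hq : (-1:ℝ) < (p-3)/2 := by linarith
  have hInt : IntegrableOn
      (fun s : ℝ => (K * t^e * (Real.log (Real.exp 1 + t))^α) * s ^ ((p-3)/2))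
      (Set.Ioc 0 t) := by
    exact ((intervalIntegral.intervalIntegrable_rpow' (a := 0) (b := t) hq).1).const_mul _
  rw [intervalIntegral.integral_of_le ht.le]
  have key : ∫ s in Set.Ioc 0 t, (s ^ p * (Real.log (Real.exp 1 + s)) ^ α) / s ^ 2 ≤
      ∫ s in Set.Ioc 0 t, (K * t^e * (Real.log (Real.exp 1 + t))^α) * s ^ ((p-3)/2) := by
    apply integral_mono_of_nonneg ?_ hInt ?_
    · filter_upwards [ae_restrict_mem measurableSet_Ioc] with s hs
      have hs0 : 0 < s := hs.1
      have hLs : (1:ℝ) ≤ Real.log (Real.exp 1 + s) := log_ge_one s hs0.le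
      have : (0:ℝ) < Real.log (Real.exp 1 + s) := by linarith
      positivity
    · filter_upwards [ae_restrict_mem measurableSet_Ioc] with s hs
      obtain ⟨hs0, hst⟩ := hs
      have hLs : (1:ℝ) ≤ Real.log (Real.exp 1 + s) := log_ge_one s hs0.le
      have heq : (s ^ p * (Real.log (Real.exp 1 + s)) ^ α) / s ^ 2
          = s ^ (p-2) * (Real.log (Real.exp 1 + s)) ^ α := by
        rw [mul_div_right_comm, ← Real.rpow_natCast s 2, ← Real.rpow_sub hs0]
        norm_num
      rw [heq]
      have hb := hKle t s hs0 hst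
      calc s ^ (p-2) * (Real.log (Real.exp 1 + s)) ^ α
          ≤ s ^ (p-2) * (K * (t/s) ^ e * (Real.log (Real.exp 1 + t)) ^ α) :=
            mul_le_mul_of_nonneg_left hb (Real.rpow_nonneg hs0.le _)
        _ = (K * t^e * (Real.log (Real.exp 1 + t))^α) * (s ^ (p-2) / s ^ e) := by
            rw [Real.div_rpow ht.le hs0.le]; ring
        _ = (K * t^e * (Real.log (Real.exp 1 + t))^α) * s ^ ((p-3)/2) := by
            rw [← Real.rpow_sub hs0, show p - 2 - e = (p-3)/2 by rw [he]; ring]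
  have hval : ∫ s in Set.Ioc 0 t, (K * t^e * (Real.log (Real.exp 1 + t))^α) * s ^ ((p-3)/2)
      = (K * t^e * (Real.log (Real.exp 1 + t))^α) * (t ^ e / e) := by
    rw [MeasureTheory.integral_const_mul]
    congr 1
    rw [← intervalIntegral.integral_of_le ht.le, _root_.integral_rpow (Or.inl hq),
      Real.zero_rpow (by linarith : (p-3)/2 + 1 ≠ 0),
      show (p-3)/2 + 1 = e by rw [he]; ring]
    ring
  have hfin : (K * t^e * (Real.log (Real.exp 1 + t))^α) * (t ^ e / e)
      = K * (2/(p-1)) * (t ^ p * (Real.log (Real.exp 1 + t)) ^ α) / t := by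
    have h1 : t ^ e * t ^ e = t ^ p / t := by
      rw [← Real.rpow_add ht, show e + e = p - 1 by rw [he]; ring,
        Real.rpow_sub ht, Real.rpow_one]
    have hp1 : p - 1 ≠ 0 := by linarith
    calc (K * t^e * (Real.log (Real.exp 1 + t))^α) * (t ^ e / e)
        = (K/e) * (Real.log (Real.exp 1 + t))^α * (t^e * t^e) := by ring
      _ = (K/e) * (Real.log (Real.exp 1 + t))^α * (t^p/t) := by rw [h1]
      _ = K * (2/(p-1)) * (t ^ p * (Real.log (Real.exp 1 + t)) ^ α) / t := by
          rw [he]; field_simp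
  calc _ ≤ _ := key
    _ = _ := hval
    _ = _ := hfin
end

section
/- Let p ∈ [1,∞), α ∈ [0,p), σ > 0, and set γ = p/(σ+α). Then there exists a constant C > 0 (depending only on p, α, σ) such that for all s, t > 0: (st)^p · (log(e+st))^(−α) − s^p · (log(e+s))^σ ≤ C · 𝟙_{t>1} · exp(C·t^γ). -/
set_option maxHeartbeats 800000

open Real

theorem young_exp_complement (p α σ : ℝ) (hp : 1 ≤ p) (hα0 : 0 ≤ α) (hαp : α < p)
    (hσ : 0 < σ) :
    ∃ C : ℝ, 0 < C ∧ ∀ s t : ℝ, 0 < s → 0 < t →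
      (s * t) ^ p * (Real.log (Real.exp 1 + s * t)) ^ (-α) -
          s ^ p * (Real.log (Real.exp 1 + s)) ^ σ ≤
        C * (if 1 < t then (1 : ℝ) else 0) * Real.exp (C * t ^ (p / (σ + α))) := by
  have hp0 : (0:ℝ) < p := lt_of_lt_of_le one_pos hp
  have hσα : 0 < σ + α := by linarith
  set γ := p / (σ + α) with hγdef
  have hγ : 0 < γ := div_pos hp0 hσα
  have hγp : γ * (σ + α) = p := div_mul_cancel₀ p (ne_of_gt hσα)
  refine ⟨p + σ + α, by linarith, ?_⟩
  set C := p + σ + α with hCdef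
  have hC1 : 1 ≤ C := by rw [hCdef]; linarith
  intro s t hs ht
  have hst : 0 < s * t := mul_pos hs ht
  have hlog : ∀ x : ℝ, 0 < x → 1 ≤ Real.log (Real.exp 1 + x) := by
    intro x hx
    have h := Real.log_le_log (Real.exp_pos 1) (by linarith : Real.exp 1 ≤ Real.exp 1 + x)
    simpa [Real.log_exp] using h
  have h1 := hlog _ hst
  have h2 := hlog _ hs
  have hnegpow : (Real.log (Real.exp 1 + s * t)) ^ (-α) ≤ 1 :=
    Real.rpow_le_one_of_one_le_of_nonpos h1 (by linarith)
  have hnegpow0 : 0 ≤ (Real.log (Real.exp 1 + s * t)) ^ (-α) :=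
    Real.rpow_nonneg (by linarith) _
  have hpowσ : 1 ≤ (Real.log (Real.exp 1 + s)) ^ σ :=
    Real.one_le_rpow h2 hσ.le
  have hsp0 : 0 ≤ s ^ p := Real.rpow_nonneg hs.le _
  by_cases hT : 1 < t
  · simp only [if_pos hT, mul_one]
    have htγ1 : 1 ≤ t ^ γ := Real.one_le_rpow hT.le hγ.le
    have htγ0 : (0:ℝ) < t ^ γ := lt_of_lt_of_le one_pos htγ1
    rcases le_or_gt s (Real.exp (t ^ γ)) with hcase | hcase
    · -- small s : (st)^p ≤ exp(C t^γ)
      have key : (s * t) ^ p ≤ Real.exp (C * t ^ γ) := by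
        have h3 : s * t ≤ t * Real.exp (t ^ γ) := by
          rw [mul_comm]; exact mul_le_mul_of_nonneg_left hcase ht.le
        have h4 : (s * t) ^ p ≤ (t * Real.exp (t ^ γ)) ^ p :=
          Real.rpow_le_rpow hst.le h3 hp0.le
        refine h4.trans ?_
        have hpos : (0:ℝ) < t * Real.exp (t ^ γ) := mul_pos ht (Real.exp_pos _)
        rw [Real.rpow_def_of_pos hpos, Real.log_mul (ne_of_gt ht) (ne_of_gt (Real.exp_pos _)),
          Real.log_exp]
        apply Real.exp_le_exp.2
        -- (log t + t^γ) * p ≤ C * t^γ  i.e.  p * log t ≤ (σ+α) * t^γ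
        have hlt : γ * Real.log t ≤ t ^ γ := by
          have := Real.log_le_sub_one_of_pos htγ0
          rw [Real.log_rpow ht] at this
          linarith
        have : p * Real.log t ≤ (σ + α) * t ^ γ := by
          calc p * Real.log t = (σ + α) * (γ * Real.log t) := by
                rw [← mul_assoc, mul_comm (σ+α) γ, hγp]
            _ ≤ (σ + α) * t ^ γ := by nlinarith
        nlinarith
      have hsub : s ^ p * (Real.log (Real.exp 1 + s)) ^ σ ≥ 0 := by positivity
      have hmain : (s * t) ^ p * (Real.log (Real.exp 1 + s * t)) ^ (-α) ≤ (s * t) ^ p := by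
        nlinarith [Real.rpow_nonneg hst.le p]
      have hCe : Real.exp (C * t ^ γ) ≤ C * Real.exp (C * t ^ γ) := by
        nlinarith [Real.exp_pos (C * t ^ γ)]
      linarith
    · -- big s : LHS ≤ 0
      have hlogs : t ^ γ < Real.log s := (Real.lt_log_iff_exp_lt hs).2 hcase
      have hls : t ^ γ ≤ Real.log (Real.exp 1 + s) := by
        have := Real.log_le_log hs (by linarith [Real.exp_pos 1] : s ≤ Real.exp 1 + s)
        linarith
      have hlst : t ^ γ ≤ Real.log (Real.exp 1 + s * t) := by
        have h5 : s ≤ s * t := le_mul_of_one_le_right hs.le hT.le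
        have := Real.log_le_log hs (by linarith [Real.exp_pos 1] : s ≤ Real.exp 1 + s * t)
        linarith
      -- L^{-α} ≤ (t^γ)^{-α}
      have hLα : (Real.log (Real.exp 1 + s * t)) ^ (-α) ≤ (t ^ γ) ^ (-α) :=
        Real.rpow_le_rpow_of_nonpos htγ0 hlst (neg_nonpos.2 hα0)
      have e0 : (s * t) ^ p = s ^ p * t ^ p := Real.mul_rpow hs.le ht.le
      have e1 : t ^ p * (t ^ γ) ^ (-α) = t ^ (γ * σ) := by
        have hxy : p + γ * (-α) = γ * σ := by nlinarith [hγp]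
        rw [← Real.rpow_mul ht.le, ← Real.rpow_add ht, hxy]
      have e2 : (t ^ γ) ^ σ ≤ (Real.log (Real.exp 1 + s)) ^ σ :=
        Real.rpow_le_rpow htγ0.le hls hσ.le
      have e3 : t ^ (γ * σ) = (t ^ γ) ^ σ := Real.rpow_mul ht.le γ σ
      have htp0 : 0 ≤ t ^ p := Real.rpow_nonneg ht.le _
      have hfinal : (s * t) ^ p * (Real.log (Real.exp 1 + s * t)) ^ (-α) ≤
          s ^ p * (Real.log (Real.exp 1 + s)) ^ σ := by
        calc (s * t) ^ p * (Real.log (Real.exp 1 + s * t)) ^ (-α)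
            ≤ s ^ p * t ^ p * (t ^ γ) ^ (-α) := by
              rw [e0]
              have h0 : 0 ≤ s ^ p * t ^ p := by positivity
              exact mul_le_mul_of_nonneg_left hLα h0
          _ = s ^ p * (t ^ p * (t ^ γ) ^ (-α)) := by ring
          _ = s ^ p * t ^ (γ * σ) := by rw [e1]
          _ ≤ s ^ p * (Real.log (Real.exp 1 + s)) ^ σ := by
              rw [e3]; exact mul_le_mul_of_nonneg_left e2 hsp0
      have hrpos : (0:ℝ) ≤ C * Real.exp (C * t ^ γ) := by positivity
      linarith
  · simp only [if_neg hT, mul_zero, zero_mul]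
    push_neg at hT
    have h3 : (s * t) ^ p ≤ s ^ p :=
      Real.rpow_le_rpow hst.le (by nlinarith) hp0.le
    have h4 : (s * t) ^ p * (Real.log (Real.exp 1 + s * t)) ^ (-α) ≤ s ^ p := by
      nlinarith [Real.rpow_nonneg hst.le p]
    have h5 : s ^ p ≤ s ^ p * (Real.log (Real.exp 1 + s)) ^ σ := by nlinarith
    linarith
end

section
/- Let 1 ≤ r < p < ∞, let σ, α ∈ ℝ with α > −r, and let q ∈ (r,∞) and γ ∈ ℝ be determined by 1/r = 1/p + 1/q and α/r = σ/p + γ/q. Then there exists a constant C > 0 (depending only on r, p, σ, α) such that for all s, t > 0: (st)^r · (log(e+st))^α − s^p · (log(e+s))^σ ≤ C · t^q · (log(e+t))^γ. -/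
open Real

lemma E_gt : (2.7 : ℝ) < Real.exp 1 := by
  have := Real.exp_one_gt_d9; norm_num at this ⊢; linarith

lemma one_le_L (u : ℝ) (hu : 0 ≤ u) : 1 ≤ Real.log (Real.exp 1 + u) := by
  have h1 : Real.exp 1 ≤ Real.exp 1 + u := by linarith
  have := Real.log_le_log (Real.exp_pos 1) h1
  rwa [Real.log_exp] at this

lemma L_pos (u : ℝ) (hu : 0 ≤ u) : 0 < Real.log (Real.exp 1 + u) :=
  lt_of_lt_of_le one_pos (one_le_L u hu)

lemma L_mono {u v : ℝ} (hu : 0 ≤ u) (huv : u ≤ v) :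
    Real.log (Real.exp 1 + u) ≤ Real.log (Real.exp 1 + v) := by
  have h : (0:ℝ) < Real.exp 1 + u := by positivity
  exact Real.log_le_log h (by linarith)

lemma L_mul_le (u v : ℝ) (hu : 0 ≤ u) (hv : 0 ≤ v) :
    Real.log (Real.exp 1 + u * v) ≤ Real.log (Real.exp 1 + u) + Real.log (Real.exp 1 + v) := by
  have hE : (1:ℝ) ≤ Real.exp 1 := by have := E_gt; linarith
  have h : Real.exp 1 + u * v ≤ (Real.exp 1 + u) * (Real.exp 1 + v) := by nlinarith
  have h2 : (0:ℝ) < Real.exp 1 + u * v := by positivity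
  calc Real.log (Real.exp 1 + u * v) ≤ Real.log ((Real.exp 1 + u) * (Real.exp 1 + v)) :=
        Real.log_le_log h2 h
    _ = _ := Real.log_mul (by positivity) (by positivity)

lemma L_le_two_add_log (u : ℝ) (hu : 1 ≤ u) :
    Real.log (Real.exp 1 + u) ≤ 2 + Real.log u := by
  have hE := E_gt
  have he2 : Real.exp 2 = Real.exp 1 * Real.exp 1 := by
    rw [show (2:ℝ) = 1 + 1 by norm_num, Real.exp_add]
  have h7 : (6.29:ℝ) ≤ Real.exp 1 * Real.exp 1 - 1 := by nlinarith
  have h : Real.exp 1 + u ≤ Real.exp 2 * u := by rw [he2]; nlinarith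
  calc Real.log (Real.exp 1 + u) ≤ Real.log (Real.exp 2 * u) :=
        Real.log_le_log (by positivity) h
    _ = 2 + Real.log u := by
        rw [Real.log_mul (by positivity) (by linarith), Real.log_exp]

lemma L_le_two (u : ℝ) (hu0 : 0 ≤ u) (hu : u ≤ 1) : Real.log (Real.exp 1 + u) ≤ 2 := by
  have := L_mono hu0 hu
  have h2 := L_le_two_add_log 1 le_rfl
  simp [Real.log_one] at h2
  linarith

lemma log_le_eps {ε u : ℝ} (hε : 0 < ε) (hu : 0 < u) :
    Real.log u ≤ ε * u + Real.log ε⁻¹ := by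
  have h1 : Real.log (ε * u) = Real.log ε + Real.log u :=
    Real.log_mul (ne_of_gt hε) (ne_of_gt hu)
  have h2 : Real.log (ε * u) ≤ ε * u - 1 := Real.log_le_sub_one_of_pos (by positivity)
  rw [Real.log_inv]
  linarith

lemma bnd (P v u : ℝ) (h : |v| ≤ u) : P * v ≤ |P| * u := by
  calc P * v ≤ |P * v| := le_abs_self _
    _ = |P| * |v| := abs_mul _ _
    _ ≤ |P| * u := mul_le_mul_of_nonneg_left h (abs_nonneg P)

lemma log_le_L (u : ℝ) (hu : 0 < u) : Real.log u ≤ Real.log (Real.exp 1 + u) :=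
  Real.log_le_log hu (by have := Real.exp_pos 1; linarith)

lemma mul_div_le' {a b c : ℝ} (hb : 0 ≤ b) (hc : 0 < c) (h : a ≤ c) : a * (b / c) ≤ b := by
  rw [mul_div_assoc', div_le_iff₀ hc]
  nlinarith

lemma reduce {r p q σ α γ K' a b x y z : ℝ} (hr : 0 < r) (hd : 0 < p - r)
    (hI1 : r * r = (p - r) * (q - r)) (hI2 : (p - r) * γ = p * α - r * σ)
    (H : (p - r) * a + σ * x ≤ r * b + α * z)
    (G : p * α * z - r * σ * x - (p * α - r * σ) * y ≤ K') :
    r * a + α * z ≤ K' / (p - r) + (q - r) * b + γ * y := by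
  have rH := mul_le_mul_of_nonneg_left H (le_of_lt hr)
  have hI1t : (r * r) * b = ((p - r) * (q - r)) * b := by rw [hI1]
  have hI2y : ((p - r) * γ) * y = (p * α - r * σ) * y := by rw [hI2]
  have hdiv : (p - r) * (K' / (p - r)) = K' := by field_simp; try ring
  have h3 : (p - r) * (r * a + α * z) ≤
      (p - r) * (K' / (p - r) + (q - r) * b + γ * y) := by nlinarith [rH, G, hI1t, hI2y, hdiv]
  exact le_of_mul_le_mul_left h3 hd

set_option maxHeartbeats 2000000 in
lemma core (r p q σ α γ : ℝ) (hr : 1 ≤ r) (hrp : r < p) (hrq : r < q)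
    (hI1 : r * r = (p - r) * (q - r)) (hI2 : (p - r) * γ = p * α - r * σ) :
    ∃ K : ℝ, ∀ s t : ℝ, 0 < s → 0 < t →
      (p - r) * Real.log s + σ * Real.log (Real.log (Real.exp 1 + s)) ≤
        r * Real.log t + α * Real.log (Real.log (Real.exp 1 + s * t)) →
      r * Real.log s + α * Real.log (Real.log (Real.exp 1 + s * t)) ≤
        K + (q - r) * Real.log t + γ * Real.log (Real.log (Real.exp 1 + t)) := by
  have hr0 : (0:ℝ) < r := by linarith
  have hd0 : (0:ℝ) < p - r := by linarith
  have hqr0 : (0:ℝ) < q - r := by linarith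
  -- constants
  obtain ⟨m, hm⟩ : ∃ m : ℝ, m = (abs α) + (abs σ) := ⟨_, rfl⟩
  have hm0 : 0 ≤ m := by rw [hm]; positivity
  obtain ⟨Mc, hMc⟩ : ∃ M : ℝ, M = (abs (p*α)) + (abs (r*σ)) := ⟨_, rfl⟩
  have hMc0 : 0 ≤ Mc := by rw [hMc]; positivity
  obtain ⟨εa, hεa⟩ : ∃ e : ℝ, e = (p-r) / (2*m + 2 + (p-r)) := ⟨_, rfl⟩
  have hεa0 : 0 < εa := by rw [hεa]; apply div_pos hd0; linarith
  obtain ⟨La, hLa⟩ : ∃ L : ℝ, L = Real.log εa⁻¹ := ⟨_, rfl⟩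
  obtain ⟨x0, hx0⟩ : ∃ x0 : ℝ, x0 = εa * (4 + (2*m/(p-r))*La) + La := ⟨_, rfl⟩
  obtain ⟨w, hw⟩ : ∃ w : ℝ, w = (abs α) + (abs γ) := ⟨_, rfl⟩
  have hw0 : 0 ≤ w := by rw [hw]; positivity
  obtain ⟨εb, hεb⟩ : ∃ e : ℝ, e = (q-r) / (w + 1) := ⟨_, rfl⟩
  have hεb0 : 0 < εb := by rw [hεb]; apply div_pos hqr0; linarith
  obtain ⟨Lb, hLb⟩ : ∃ L : ℝ, L = Real.log εb⁻¹ := ⟨_, rfl⟩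
  obtain ⟨cc, hcc⟩ : ∃ c : ℝ, c = r/(2*(p-r)) + 1 := ⟨_, rfl⟩
  have hcc0 : 0 < cc := by
    rw [hcc]
    have h : 0 < r/(2*(p-r)) := by positivity
    linarith
  obtain ⟨εc, hεc⟩ : ∃ e : ℝ, e = (q-r) / (2*((abs α)*cc + (abs γ) + 1)) := ⟨_, rfl⟩
  have hεc0 : 0 < εc := by
    rw [hεc]; apply div_pos hqr0
    have h1 : 0 ≤ (abs α)*cc := mul_nonneg (abs_nonneg _) hcc0.le
    have h2 : 0 ≤ (abs γ) := abs_nonneg _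
    linarith
  obtain ⟨Lc, hLc⟩ : ∃ L : ℝ, L = Real.log εc⁻¹ := ⟨_, rfl⟩
  obtain ⟨εd, hεd⟩ : ∃ e : ℝ, e = (p-r) / (2*(m+1)) := ⟨_, rfl⟩
  have hεd0 : 0 < εd := by rw [hεd]; apply div_pos hd0; linarith
  obtain ⟨Ld, hLd⟩ : ∃ L : ℝ, L = Real.log εd⁻¹ := ⟨_, rfl⟩
  obtain ⟨c2, hc2⟩ : ∃ c : ℝ, c = (2*r + (p-r))/(p-r) := ⟨_, rfl⟩
  have hc20 : 0 < c2 := by rw [hc2]; apply div_pos (by linarith) hd0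
  obtain ⟨c3, hc3⟩ : ∃ c : ℝ, c = 4 + (2*m/(p-r))*Ld := ⟨_, rfl⟩
  obtain ⟨Cp, hCp⟩ : ∃ c : ℝ, c = 2 + (abs c3) + c2 := ⟨_, rfl⟩
  have hCp0 : 0 < Cp := by rw [hCp]; have := abs_nonneg c3; linarith
  obtain ⟨b1, hb1⟩ : ∃ b : ℝ, b = Real.log (Cp + 1) := ⟨_, rfl⟩
  have hb10 : 0 ≤ b1 := by rw [hb1]; apply Real.log_nonneg; linarith
  obtain ⟨b2, hb2⟩ : ∃ b : ℝ, b = Real.log (2 + 2*(p-r)/r) := ⟨_, rfl⟩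
  have hb20 : 0 ≤ b2 := by
    rw [hb2]; apply Real.log_nonneg
    have : 0 < 2*(p-r)/r := by positivity
    linarith
  obtain ⟨K1, hK1⟩ : ∃ K : ℝ, K = Mc/(p-r) := ⟨_, rfl⟩
  obtain ⟨K2, hK2⟩ : ∃ K : ℝ, K = Mc*(x0+1)/(p-r) := ⟨_, rfl⟩
  obtain ⟨K3, hK3⟩ : ∃ K : ℝ, K = 2*(abs α) + 2*(q-r) + w*Lb := ⟨_, rfl⟩
  obtain ⟨K4, hK4⟩ : ∃ K : ℝ, K = (abs α)*εc*4 + (abs γ)*εc*2 + ((abs α)+(abs γ))*Lc := ⟨_, rfl⟩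
  obtain ⟨K5, hK5⟩ : ∃ K : ℝ, K = ((abs (p*α))*b1 + (abs (r*σ))*(b1+b2))/(p-r) := ⟨_, rfl⟩
  refine ⟨|K1| + |K2| + |K3| + |K4| + |K5|, ?_⟩
  intro s t hs ht H
  have hKa1 := le_abs_self K1
  have hKa2 := le_abs_self K2
  have hKa3 := le_abs_self K3
  have hKa4 := le_abs_self K4
  have hKa5 := le_abs_self K5
  have hKb1 := abs_nonneg K1
  have hKb2 := abs_nonneg K2
  have hKb3 := abs_nonneg K3
  have hKb4 := abs_nonneg K4
  have hKb5 := abs_nonneg K5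
  -- basic log facts
  have hX1 : 1 ≤ Real.log (Real.exp 1 + s) := one_le_L s hs.le
  have hY1 : 1 ≤ Real.log (Real.exp 1 + t) := one_le_L t ht.le
  have hZ1 : 1 ≤ Real.log (Real.exp 1 + s*t) := one_le_L _ (by positivity)
  have hXpos : (0:ℝ) < Real.log (Real.exp 1 + s) := by linarith
  have hYpos : (0:ℝ) < Real.log (Real.exp 1 + t) := by linarith
  have hZpos : (0:ℝ) < Real.log (Real.exp 1 + s*t) := by linarith
  have hx0' : 0 ≤ Real.log (Real.log (Real.exp 1 + s)) := Real.log_nonneg hX1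
  have hy0' : 0 ≤ Real.log (Real.log (Real.exp 1 + t)) := Real.log_nonneg hY1
  have hz0' : 0 ≤ Real.log (Real.log (Real.exp 1 + s*t)) := Real.log_nonneg hZ1
  have hZXY : Real.log (Real.exp 1 + s*t) ≤
      Real.log (Real.exp 1 + s) + Real.log (Real.exp 1 + t) := L_mul_le s t hs.le ht.le
  rcases le_total t 1 with ht1 | ht1
  · -- Case A : t ≤ 1
    have hv0 : Real.log t ≤ 0 := Real.log_nonpos ht.le ht1
    have hY2 : Real.log (Real.exp 1 + t) ≤ 2 := L_le_two t ht.le ht1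
    have hy1 : Real.log (Real.log (Real.exp 1 + t)) ≤ 1 := by
      have := Real.log_le_sub_one_of_pos hYpos; linarith
    rcases le_total s 1 with hs1 | hs1
    · -- A1 : s ≤ 1
      have hst1 : s*t ≤ 1 := mul_le_one₀ hs1 ht.le ht1
      have hX2 : Real.log (Real.exp 1 + s) ≤ 2 := L_le_two s hs.le hs1
      have hZ2 : Real.log (Real.exp 1 + s*t) ≤ 2 := L_le_two _ (by positivity) hst1
      have hx1 : Real.log (Real.log (Real.exp 1 + s)) ≤ 1 := by
        have := Real.log_le_sub_one_of_pos hXpos; linarith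
      have hz1 : Real.log (Real.log (Real.exp 1 + s*t)) ≤ 1 := by
        have := Real.log_le_sub_one_of_pos hZpos; linarith
      have g1 : p*α*(Real.log (Real.log (Real.exp 1 + s*t)) - Real.log (Real.log (Real.exp 1 + t)))
          ≤ (abs (p*α)) * 1 := bnd _ _ _ (abs_le.mpr ⟨by linarith, by linarith⟩)
      have g2 : (r*σ)*(Real.log (Real.log (Real.exp 1 + t)) - Real.log (Real.log (Real.exp 1 + s)))
          ≤ (abs (r*σ)) * 1 := bnd _ _ _ (abs_le.mpr ⟨by linarith, by linarith⟩)
      have G : p*α*Real.log (Real.log (Real.exp 1 + s*t)) - r*σ*Real.log (Real.log (Real.exp 1 + s))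
          - (p*α - r*σ)*Real.log (Real.log (Real.exp 1 + t)) ≤ Mc := by linarith
      have hred := reduce hr0 hd0 hI1 hI2 H G
      linarith
    · -- A2 : 1 ≤ s
      have hu0 : 0 ≤ Real.log s := Real.log_nonneg hs1
      have hXu : Real.log (Real.exp 1 + s) ≤ 2 + Real.log s := L_le_two_add_log s hs1
      have hsts : s*t ≤ s := by
        have := mul_le_mul_of_nonneg_left ht1 hs.le; linarith
      have hZX : Real.log (Real.exp 1 + s*t) ≤ Real.log (Real.exp 1 + s) :=
        L_mono (by positivity) hsts
      have hYZ : Real.log (Real.exp 1 + t) ≤ Real.log (Real.exp 1 + s*t) :=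
        L_mono ht.le (le_mul_of_one_le_left ht.le hs1)
      have hzx : Real.log (Real.log (Real.exp 1 + s*t)) ≤ Real.log (Real.log (Real.exp 1 + s)) :=
        Real.log_le_log hZpos hZX
      have hyz : Real.log (Real.log (Real.exp 1 + t)) ≤ Real.log (Real.log (Real.exp 1 + s*t)) :=
        Real.log_le_log hYpos hYZ
      have hru : r * Real.log t ≤ 0 := by
        have := mul_nonneg hr0.le (neg_nonneg.mpr hv0); linarith
      have hαz : α * Real.log (Real.log (Real.exp 1 + s*t)) ≤
          (abs α) * Real.log (Real.log (Real.exp 1 + s)) :=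
        bnd _ _ _ (abs_le.mpr ⟨by linarith, hzx⟩)
      have hσx : (-σ) * Real.log (Real.log (Real.exp 1 + s)) ≤
          (abs σ) * Real.log (Real.log (Real.exp 1 + s)) := by
        have := bnd (-σ) (Real.log (Real.log (Real.exp 1 + s)))
          (Real.log (Real.log (Real.exp 1 + s))) (abs_le.mpr ⟨by linarith, le_rfl⟩)
        rwa [abs_neg] at this
      have hmx : m * Real.log (Real.log (Real.exp 1 + s)) =
          (abs α) * Real.log (Real.log (Real.exp 1 + s)) +
          (abs σ) * Real.log (Real.log (Real.exp 1 + s)) := by rw [hm]; ring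
      have hdu : (p-r) * Real.log s ≤ m * Real.log (Real.log (Real.exp 1 + s)) := by linarith
      have hlog2u : Real.log (Real.log (Real.exp 1 + s)) ≤ Real.log (2 + Real.log s) :=
        Real.log_le_log hXpos (by linarith)
      have heps : Real.log (2 + Real.log s) ≤ εa*(2+Real.log s) + La := by
        rw [hLa]; exact log_le_eps hεa0 (by linarith)
      have hmea : 2*m*εa ≤ (p-r) := by
        rw [hεa]; exact mul_div_le' hd0.le (by linarith) (by linarith)
      have hprod : m*(εa*(2+Real.log s)) ≤ ((p-r)/2)*(2+Real.log s) := by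
        have := mul_le_mul_of_nonneg_right (show m*εa ≤ (p-r)/2 by linarith)
          (show (0:ℝ) ≤ 2+Real.log s by linarith)
        linarith
      have hmlx : m * Real.log (Real.log (Real.exp 1 + s)) ≤ m*(εa*(2+Real.log s)) + m*La := by
        have := mul_le_mul_of_nonneg_left (le_trans hlog2u heps) hm0
        linarith
      have hu2 : (p-r)/2 * Real.log s ≤ (p-r) + m*La := by linarith
      have hub : Real.log s ≤ 2 + (2*m/(p-r))*La := by
        have h7 := mul_le_mul_of_nonneg_left hu2 (show (0:ℝ) ≤ 2/(p-r) by positivity)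
        have e1 : (2/(p-r))*((p-r)/2 * Real.log s) = Real.log s := by field_simp; try ring
        have e2 : (2/(p-r))*((p-r) + m*La) = 2 + (2*m/(p-r))*La := by field_simp; try ring
        rw [e1, e2] at h7; exact h7
      have hxx0 : Real.log (Real.log (Real.exp 1 + s)) ≤ x0 := by
        have h8 : εa*(2 + Real.log s) ≤ εa*(4 + (2*m/(p-r))*La) := by
          apply mul_le_mul_of_nonneg_left _ hεa0.le; linarith
        rw [hx0]; linarith
      have g1 : p*α*(Real.log (Real.log (Real.exp 1 + s*t)) - Real.log (Real.log (Real.exp 1 + t)))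
          ≤ (abs (p*α))*(Real.log (Real.log (Real.exp 1 + s))+1) :=
        bnd _ _ _ (abs_le.mpr ⟨by linarith, by linarith⟩)
      have g2 : (r*σ)*(Real.log (Real.log (Real.exp 1 + t)) - Real.log (Real.log (Real.exp 1 + s)))
          ≤ (abs (r*σ))*(Real.log (Real.log (Real.exp 1 + s))+1) :=
        bnd _ _ _ (abs_le.mpr ⟨by linarith, by linarith⟩)
      have G : p*α*Real.log (Real.log (Real.exp 1 + s*t)) - r*σ*Real.log (Real.log (Real.exp 1 + s))
          - (p*α - r*σ)*Real.log (Real.log (Real.exp 1 + t)) ≤ Mc*(x0+1) := by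
        have h9 : (abs (p*α))*(Real.log (Real.log (Real.exp 1 + s))+1)
            + (abs (r*σ))*(Real.log (Real.log (Real.exp 1 + s))+1) ≤ Mc*(x0+1) := by
          have i1 : (abs (p*α))*(Real.log (Real.log (Real.exp 1 + s))+1) ≤
              (abs (p*α))*(x0+1) := mul_le_mul_of_nonneg_left (by linarith) (abs_nonneg _)
          have i2 : (abs (r*σ))*(Real.log (Real.log (Real.exp 1 + s))+1) ≤
              (abs (r*σ))*(x0+1) := mul_le_mul_of_nonneg_left (by linarith) (abs_nonneg _)
          rw [hMc]
          linarith
        linarith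
      have hred := reduce hr0 hd0 hI1 hI2 H G
      linarith
  · -- Case B : 1 ≤ t
    have hv0 : 0 ≤ Real.log t := Real.log_nonneg ht1
    have hYv : Real.log (Real.exp 1 + t) ≤ 2 + Real.log t := L_le_two_add_log t ht1
    have hvY : Real.log t ≤ Real.log (Real.exp 1 + t) := log_le_L t ht
    rcases le_total s 1 with hs1 | hs1
    · -- B1 : s ≤ 1
      have hu0 : Real.log s ≤ 0 := Real.log_nonpos hs.le hs1
      have hX2 : Real.log (Real.exp 1 + s) ≤ 2 := L_le_two s hs.le hs1
      have hZ3Y : Real.log (Real.exp 1 + s*t) ≤ 3*Real.log (Real.exp 1 + t) := by linarith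
      have hz2y : Real.log (Real.log (Real.exp 1 + s*t)) ≤ 2 + Real.log (Real.log (Real.exp 1 + t)) := by
        have h1 := Real.log_le_log hZpos hZ3Y
        have h2 : Real.log (3*Real.log (Real.exp 1 + t)) = Real.log 3 +
            Real.log (Real.log (Real.exp 1 + t)) := Real.log_mul (by norm_num) (ne_of_gt hYpos)
        have h3 : Real.log 3 ≤ 2 := by
          have := Real.log_le_sub_one_of_pos (show (0:ℝ) < 3 by norm_num); linarith
        linarith
      have hru : r * Real.log s ≤ 0 := by
        have := mul_nonneg hr0.le (neg_nonneg.mpr hu0); linarith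
      have hαz : α * Real.log (Real.log (Real.exp 1 + s*t)) ≤
          (abs α)*(2 + Real.log (Real.log (Real.exp 1 + t))) :=
        bnd _ _ _ (abs_le.mpr ⟨by linarith, hz2y⟩)
      have hyv : Real.log (Real.log (Real.exp 1 + t)) ≤ Real.log (2 + Real.log t) :=
        Real.log_le_log hYpos (by linarith)
      have hyeps : Real.log (2 + Real.log t) ≤ εb*(2+Real.log t) + Lb := by
        rw [hLb]; exact log_le_eps hεb0 (by linarith)
      have hwεb : w*εb ≤ (q-r) := by
        rw [hεb]; exact mul_div_le' hqr0.le (by linarith) (by linarith)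
      have hwy : ((abs α) - γ) * Real.log (Real.log (Real.exp 1 + t)) ≤
          w * Real.log (Real.log (Real.exp 1 + t)) :=
        mul_le_mul_of_nonneg_right (by rw [hw]; linarith [neg_abs_le γ]) hy0'
      have hwly : w * Real.log (Real.log (Real.exp 1 + t)) ≤ w*(εb*(2+Real.log t)) + w*Lb := by
        have := mul_le_mul_of_nonneg_left (le_trans hyv hyeps) hw0
        linarith
      have hprod : w*(εb*(2+Real.log t)) ≤ (q-r)*(2+Real.log t) := by
        have := mul_le_mul_of_nonneg_right hwεb (show (0:ℝ) ≤ 2+Real.log t by linarith)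
        linarith
      have habs : α * Real.log (Real.log (Real.exp 1 + s*t)) ≤
          2*(abs α) + (abs α) * Real.log (Real.log (Real.exp 1 + t)) := by linarith [hαz]
      linarith [habs, hwy, hwly, hprod, hru]
    · -- B2 : 1 ≤ s
      have hu0 : 0 ≤ Real.log s := Real.log_nonneg hs1
      have hXu : Real.log (Real.exp 1 + s) ≤ 2 + Real.log s := L_le_two_add_log s hs1
      have huX : Real.log s ≤ Real.log (Real.exp 1 + s) := log_le_L s hs
      have hXZ : Real.log (Real.exp 1 + s) ≤ Real.log (Real.exp 1 + s*t) :=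
        L_mono hs.le (le_mul_of_one_le_right hs.le ht1)
      have hYZ : Real.log (Real.exp 1 + t) ≤ Real.log (Real.exp 1 + s*t) :=
        L_mono ht.le (le_mul_of_one_le_left ht.le hs1)
      have hxz : Real.log (Real.log (Real.exp 1 + s)) ≤ Real.log (Real.log (Real.exp 1 + s*t)) :=
        Real.log_le_log hXpos hXZ
      have hyz : Real.log (Real.log (Real.exp 1 + t)) ≤ Real.log (Real.log (Real.exp 1 + s*t)) :=
        Real.log_le_log hYpos hYZ
      have hZ4 : Real.log (Real.exp 1 + s*t) ≤ 4 + Real.log s + Real.log t := by linarith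
      by_cases hbc : (p-r)*Real.log s ≤ (r/2)*Real.log t
      · -- B2a
        have h1 := mul_le_mul_of_nonneg_left hbc (show (0:ℝ) ≤ r/(p-r) by positivity)
        have e1 : (r/(p-r))*((p-r)*Real.log s) = r*Real.log s := by field_simp; try ring
        have esc : (r/(p-r))*(r/2) = (q-r)/2 := by
          field_simp
          linear_combination hI1
        have e2 : (r/(p-r))*((r/2)*Real.log t) = ((q-r)/2)*Real.log t := by
          rw [← mul_assoc, esc]
        rw [e1, e2] at h1
        have h2 := mul_le_mul_of_nonneg_left hbc (show (0:ℝ) ≤ 1/(p-r) by positivity)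
        have e3 : (1/(p-r))*((p-r)*Real.log s) = Real.log s := by field_simp; try ring
        have esc4 : (1/(p-r))*(r/2) = r/(2*(p-r)) := by
          field_simp
        have e4 : (1/(p-r))*((r/2)*Real.log t) = (r/(2*(p-r)))*Real.log t := by
          rw [← mul_assoc, esc4]
        rw [e3, e4] at h2
        have hcv : 4 + Real.log s + Real.log t ≤ 4 + cc*Real.log t := by
          rw [hcc]; linarith [h2]
        have hccv0 : 0 ≤ cc*Real.log t := mul_nonneg hcc0.le hv0
        have hz4 : Real.log (Real.log (Real.exp 1 + s*t)) ≤ Real.log (4 + cc*Real.log t) :=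
          Real.log_le_log hZpos (by linarith)
        have hzeps : Real.log (4 + cc*Real.log t) ≤ εc*(4+cc*Real.log t) + Lc := by
          rw [hLc]; exact log_le_eps hεc0 (by linarith)
        have hyv : Real.log (Real.log (Real.exp 1 + t)) ≤ Real.log (2 + Real.log t) :=
          Real.log_le_log hYpos (by linarith)
        have hyeps : Real.log (2 + Real.log t) ≤ εc*(2+Real.log t) + Lc := by
          rw [hLc]; exact log_le_eps hεc0 (by linarith)
        have hαz : α * Real.log (Real.log (Real.exp 1 + s*t)) ≤
            (abs α)*(εc*(4+cc*Real.log t)+Lc) :=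
          bnd _ _ _ (abs_le.mpr ⟨by linarith, by linarith⟩)
        have hγy : (-γ) * Real.log (Real.log (Real.exp 1 + t)) ≤
            (abs γ)*(εc*(2+Real.log t)+Lc) := by
          have := bnd (-γ) (Real.log (Real.log (Real.exp 1 + t))) (εc*(2+Real.log t)+Lc)
            (abs_le.mpr ⟨by linarith, by linarith⟩)
          rwa [abs_neg] at this
        have hsum : ((abs α)*cc + (abs γ))*εc ≤ (q-r)/2 := by
          rw [hεc]
          have hden : (0:ℝ) < 2*((abs α)*cc + (abs γ) + 1) := by
            have h1' : 0 ≤ (abs α)*cc := mul_nonneg (abs_nonneg _) hcc0.le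
            have h2' : 0 ≤ (abs γ) := abs_nonneg _
            linarith
          have := mul_div_le' hqr0.le hden
            (show 2*((abs α)*cc + (abs γ)) ≤ 2*((abs α)*cc + (abs γ) + 1) by linarith)
          calc ((abs α)*cc + (abs γ)) * ((q-r) / (2*((abs α)*cc + (abs γ) + 1)))
              = (2*((abs α)*cc + (abs γ))) * ((q-r) / (2*((abs α)*cc + (abs γ) + 1))) / 2 := by ring
            _ ≤ (q-r)/2 := by linarith
        have hsv := mul_le_mul_of_nonneg_right hsum hv0
        linarith [h1, hαz, hγy, hsv]
      · -- B2b
        push_neg at hbc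
        have hbc2 : (r/2)*Real.log t ≤ (p-r)*Real.log s := hbc.le
        have hσx : (-σ) * Real.log (Real.log (Real.exp 1 + s)) ≤
            (abs σ) * Real.log (Real.log (Real.exp 1 + s*t)) := by
          have := bnd (-σ) (Real.log (Real.log (Real.exp 1 + s)))
            (Real.log (Real.log (Real.exp 1 + s*t))) (abs_le.mpr ⟨by linarith, hxz⟩)
          rwa [abs_neg] at this
        have hαz : α * Real.log (Real.log (Real.exp 1 + s*t)) ≤
            (abs α) * Real.log (Real.log (Real.exp 1 + s*t)) :=
          bnd _ _ _ (abs_le.mpr ⟨by linarith, le_rfl⟩)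
        have hmz : m * Real.log (Real.log (Real.exp 1 + s*t)) =
            (abs α) * Real.log (Real.log (Real.exp 1 + s*t)) +
            (abs σ) * Real.log (Real.log (Real.exp 1 + s*t)) := by rw [hm]; ring
        have hduz : (p-r)*Real.log s ≤ r*Real.log t + m*Real.log (Real.log (Real.exp 1 + s*t)) := by
          linarith
        have hz4' : Real.log (Real.log (Real.exp 1 + s*t)) ≤ Real.log (4+Real.log s+Real.log t) :=
          Real.log_le_log hZpos hZ4
        have hzeps' : Real.log (4+Real.log s+Real.log t) ≤ εd*(4+Real.log s+Real.log t) + Ld := by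
          rw [hLd]; exact log_le_eps hεd0 (by linarith)
        have hmed : 2*m*εd ≤ (p-r) := by
          rw [hεd]; exact mul_div_le' hd0.le (by linarith) (by linarith)
        have hmz2 : m*Real.log (Real.log (Real.exp 1 + s*t)) ≤
            m*(εd*(4+Real.log s+Real.log t)) + m*Ld := by
          have := mul_le_mul_of_nonneg_left (le_trans hz4' hzeps') hm0
          linarith
        have hprod : m*(εd*(4+Real.log s+Real.log t)) ≤ ((p-r)/2)*(4+Real.log s+Real.log t) := by
          have := mul_le_mul_of_nonneg_right (show m*εd ≤ (p-r)/2 by linarith)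
            (show (0:ℝ) ≤ 4+Real.log s+Real.log t by linarith)
          linarith
        have hu2 : (p-r)/2*Real.log s ≤ (r + (p-r)/2)*Real.log t + 2*(p-r) + m*Ld := by linarith
        have hub : Real.log s ≤ c2*Real.log t + c3 := by
          have h7 := mul_le_mul_of_nonneg_left hu2 (show (0:ℝ) ≤ 2/(p-r) by positivity)
          have e1 : (2/(p-r))*((p-r)/2*Real.log s) = Real.log s := by field_simp; try ring
          have e2 : (2/(p-r))*((r+(p-r)/2)*Real.log t + 2*(p-r) + m*Ld) =
              c2*Real.log t + c3 := by
            rw [hc2, hc3]; field_simp; ring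
          rw [e1, e2] at h7; exact h7
        have hXCp : Real.log (Real.exp 1 + s) ≤ Cp*Real.log (Real.exp 1 + t) := by
          rw [hCp]
          have t1 : c2*Real.log t ≤ c2*Real.log (Real.exp 1 + t) :=
            mul_le_mul_of_nonneg_left hvY hc20.le
          have t2 : 2 + (abs c3) ≤ (2+(abs c3))*Real.log (Real.exp 1 + t) :=
            le_mul_of_one_le_right (by positivity) hY1
          linarith [le_abs_self c3, t1, t2]
        have hzb1 : Real.log (Real.log (Real.exp 1 + s*t)) ≤ b1 +
            Real.log (Real.log (Real.exp 1 + t)) := by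
          have h1' : Real.log (Real.exp 1 + s*t) ≤ (Cp+1)*Real.log (Real.exp 1 + t) := by
            linarith [hZXY, hXCp]
          have h2' := Real.log_le_log hZpos h1'
          have h3' : Real.log ((Cp+1)*Real.log (Real.exp 1 + t)) = Real.log (Cp+1) +
              Real.log (Real.log (Real.exp 1 + t)) := Real.log_mul (by linarith) (ne_of_gt hYpos)
          rw [hb1]; linarith
        have hvu : Real.log t ≤ (2*(p-r)/r)*Real.log s := by
          have h7 := mul_le_mul_of_nonneg_left hbc2 (show (0:ℝ) ≤ 2/r by positivity)
          have e1 : (2/r)*((r/2)*Real.log t) = Real.log t := by field_simp; try ring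
          have e2 : (2/r)*((p-r)*Real.log s) = (2*(p-r)/r)*Real.log s := by field_simp; try ring
          rw [e1, e2] at h7; exact h7
        have hdr0 : (0:ℝ) < 2*(p-r)/r := by positivity
        have hYb2X : Real.log (Real.exp 1 + t) ≤ (2 + 2*(p-r)/r)*Real.log (Real.exp 1 + s) := by
          have t1 : (2*(p-r)/r)*Real.log s ≤ (2*(p-r)/r)*Real.log (Real.exp 1 + s) :=
            mul_le_mul_of_nonneg_left huX hdr0.le
          linarith [t1, hvu, hYv, hX1]
        have hyb2 : Real.log (Real.log (Real.exp 1 + t)) ≤ b2 +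
            Real.log (Real.log (Real.exp 1 + s)) := by
          have h2' := Real.log_le_log hYpos hYb2X
          have h3' : Real.log ((2+2*(p-r)/r)*Real.log (Real.exp 1 + s)) =
              Real.log (2+2*(p-r)/r) + Real.log (Real.log (Real.exp 1 + s)) :=
            Real.log_mul (by linarith) (ne_of_gt hXpos)
          rw [hb2]; linarith
        have g1 : p*α*(Real.log (Real.log (Real.exp 1 + s*t)) -
            Real.log (Real.log (Real.exp 1 + t))) ≤ (abs (p*α))*b1 :=
          bnd _ _ _ (abs_le.mpr ⟨by linarith, by linarith⟩)
        have g2 : (r*σ)*(Real.log (Real.log (Real.exp 1 + t)) -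
            Real.log (Real.log (Real.exp 1 + s))) ≤ (abs (r*σ))*(b1+b2) :=
          bnd _ _ _ (abs_le.mpr ⟨by linarith, by linarith⟩)
        have G : p*α*Real.log (Real.log (Real.exp 1 + s*t)) -
            r*σ*Real.log (Real.log (Real.exp 1 + s)) -
            (p*α - r*σ)*Real.log (Real.log (Real.exp 1 + t)) ≤
            (abs (p*α))*b1 + (abs (r*σ))*(b1+b2) := by linarith
        have hred := reduce hr0 hd0 hI1 hI2 H G
        linarith


theorem young_log_complement (r p q σ α γ : ℝ) (hr : 1 ≤ r) (hrp : r < p)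
    (hα : -r < α) (hrq : r < q) (hq : 1 / r = 1 / p + 1 / q) (hγ : α / r = σ / p + γ / q) :
    ∃ C : ℝ, 0 < C ∧ ∀ s t : ℝ, 0 < s → 0 < t →
      (s * t) ^ r * (Real.log (Real.exp 1 + s * t)) ^ α -
          s ^ p * (Real.log (Real.exp 1 + s)) ^ σ ≤
        C * t ^ q * (Real.log (Real.exp 1 + t)) ^ γ := by
  have hr0 : (0:ℝ) < r := by linarith
  have hp0 : (0:ℝ) < p := by linarith
  have hq0 : (0:ℝ) < q := by linarith
  have hd0 : (0:ℝ) < p - r := by linarith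
  have hq1 : p*q = r*q + r*p := by
    have h := hq
    field_simp at h
    linarith
  have hγ1 : α*p*q = σ*r*q + γ*r*p := by
    have h := hγ
    field_simp at h
    linarith
  have hI1 : r*r = (p-r)*(q-r) := by linear_combination -hq1
  have hq2 : q*(p-r) = r*p := by linear_combination hq1
  have hI2 : (p-r)*γ = p*α - r*σ := by
    have h3 : q*((p-r)*γ) = q*(p*α - r*σ) := by linear_combination γ*hq2 - hγ1
    exact mul_left_cancel₀ (ne_of_gt hq0) h3
  obtain ⟨K, hK⟩ := core r p q σ α γ hr hrp hrq hI1 hI2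
  refine ⟨Real.exp K, Real.exp_pos K, ?_⟩
  intro s t hs ht
  have hst : 0 < s*t := mul_pos hs ht
  have hX1 : 1 ≤ Real.log (Real.exp 1 + s) := one_le_L s hs.le
  have hY1 : 1 ≤ Real.log (Real.exp 1 + t) := one_le_L t ht.le
  have hZ1 : 1 ≤ Real.log (Real.exp 1 + s*t) := one_le_L _ hst.le
  have hXpos : (0:ℝ) < Real.log (Real.exp 1 + s) := by linarith
  have hYpos : (0:ℝ) < Real.log (Real.exp 1 + t) := by linarith
  have hZpos : (0:ℝ) < Real.log (Real.exp 1 + s*t) := by linarith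
  have hRpos : 0 < Real.exp K * t^q * (Real.log (Real.exp 1 + t))^γ :=
    mul_pos (mul_pos (Real.exp_pos K) (Real.rpow_pos_of_pos ht q))
      (Real.rpow_pos_of_pos hYpos γ)
  have hSpos : 0 < s^p * (Real.log (Real.exp 1 + s))^σ :=
    mul_pos (Real.rpow_pos_of_pos hs p) (Real.rpow_pos_of_pos hXpos σ)
  have hLpos : 0 < (s*t)^r * (Real.log (Real.exp 1 + s*t))^α :=
    mul_pos (Real.rpow_pos_of_pos hst r) (Real.rpow_pos_of_pos hZpos α)
  rcases le_or_gt ((s*t)^r * (Real.log (Real.exp 1 + s*t))^α)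
      (s^p * (Real.log (Real.exp 1 + s))^σ) with hc | hc
  · linarith
  · have hlog := Real.log_le_log hSpos hc.le
    have l0 : Real.log (s^p * (Real.log (Real.exp 1 + s))^σ) =
        p*Real.log s + σ*Real.log (Real.log (Real.exp 1 + s)) := by
      rw [Real.log_mul (ne_of_gt (Real.rpow_pos_of_pos hs p))
        (ne_of_gt (Real.rpow_pos_of_pos hXpos σ)),
        Real.log_rpow hs, Real.log_rpow hXpos]
    have l1 : Real.log ((s*t)^r * (Real.log (Real.exp 1 + s*t))^α) =
        r*(Real.log s + Real.log t) + α*Real.log (Real.log (Real.exp 1 + s*t)) := by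
      rw [Real.log_mul (ne_of_gt (Real.rpow_pos_of_pos hst r))
        (ne_of_gt (Real.rpow_pos_of_pos hZpos α)),
        Real.log_rpow hst, Real.log_rpow hZpos, Real.log_mul hs.ne' ht.ne']
    rw [l0, l1] at hlog
    have hH' : (p-r)*Real.log s + σ*Real.log (Real.log (Real.exp 1 + s)) ≤
        r*Real.log t + α*Real.log (Real.log (Real.exp 1 + s*t)) := by linarith
    have hcore := hK s t hs ht hH'
    have hL : (s*t)^r * (Real.log (Real.exp 1 + s*t))^α ≤
        Real.exp K * t^q * (Real.log (Real.exp 1 + t))^γ := by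
      rw [← Real.exp_log hLpos, ← Real.exp_log hRpos]
      apply Real.exp_le_exp.mpr
      have l2 : Real.log (Real.exp K * t^q * (Real.log (Real.exp 1 + t))^γ) =
          K + q*Real.log t + γ*Real.log (Real.log (Real.exp 1 + t)) := by
        rw [Real.log_mul (ne_of_gt (mul_pos (Real.exp_pos K) (Real.rpow_pos_of_pos ht q)))
          (ne_of_gt (Real.rpow_pos_of_pos hYpos γ)),
          Real.log_mul (ne_of_gt (Real.exp_pos K)) (ne_of_gt (Real.rpow_pos_of_pos ht q)),
          Real.log_exp, Real.log_rpow ht, Real.log_rpow hYpos]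
      rw [l1, l2]
      linarith
    linarith
end

section
/- Let n ≥ 2 and ε > 0, and set g(x) = (|x| · log(4/|x|))^(−1) on B₁(0) ⊂ ℝⁿ. Then ∫_{B₁(0)} g(x)^n · (log(e + g(x)))^{n−1−ε} dx < ∞. -/
open Real MeasureTheory

open Set Metric
open scoped ENNReal

local notation "dim" => Module.finrank ℝ

lemma lintegral_fun_norm_addHaar' {E : Type*} [NormedAddCommGroup E] [NormedSpace ℝ E]
    [MeasurableSpace E] [BorelSpace E] [Nontrivial E] [FiniteDimensional ℝ E]
    (μ : Measure E) [μ.IsAddHaarMeasure] (G : ℝ → ℝ≥0∞) (hG : Measurable G) :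
    ∫⁻ x, G ‖x‖ ∂μ =
      (dim E) * μ (ball 0 1) * ∫⁻ y in Ioi (0 : ℝ), ENNReal.ofReal (y ^ (dim E - 1)) * G y := by
  have hGm : Measurable fun p : sphere (0 : E) 1 × Ioi (0 : ℝ) => G p.2 :=
    hG.comp (measurable_subtype_coe.comp measurable_snd)
  calc
    ∫⁻ x, G ‖x‖ ∂μ = ∫⁻ x : ({0}ᶜ : Set E), G ‖x.1‖ ∂(μ.comap (↑)) := by
      rw [lintegral_subtype_comap (measurableSet_singleton _).compl fun x ↦ G ‖x‖,
        restrict_compl_singleton]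
    _ = ∫⁻ p : sphere (0 : E) 1 × Ioi (0 : ℝ), G p.2
          ∂μ.toSphere.prod (.volumeIoiPow (dim E - 1)) := by
      rw [← (μ.measurePreserving_homeomorphUnitSphereProd).lintegral_comp
        (f := fun p : sphere (0 : E) 1 × Ioi (0 : ℝ) => G p.2) hGm]
      simp only [homeomorphUnitSphereProd_apply_snd_coe]
    _ = μ.toSphere univ * ∫⁻ y : Ioi (0 : ℝ), G y ∂(Measure.volumeIoiPow (dim E - 1)) := by
      rw [lintegral_prod _ hGm.aemeasurable]
      simp
      rw [mul_comm]
    _ = (dim E) * μ (ball 0 1) *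
          ∫⁻ y : Ioi (0 : ℝ), G y ∂(Measure.volumeIoiPow (dim E - 1)) := by
      rw [μ.toSphere_apply_univ]
    _ = (dim E) * μ (ball 0 1) * ∫⁻ y in Ioi (0 : ℝ), ENNReal.ofReal (y ^ (dim E - 1)) * G y := by
      congr 1
      rw [Measure.volumeIoiPow, lintegral_withDensity_eq_lintegral_mul _
        (f := fun r : Ioi (0:ℝ) => ENNReal.ofReal (r.1 ^ (dim E - 1)))
        (g := fun y : Ioi (0:ℝ) => G y.1)
        (by measurability) (hG.comp measurable_subtype_coe)]
      rw [← lintegral_subtype_comap measurableSet_Ioi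
        (fun y ↦ ENNReal.ofReal (y ^ (dim E - 1)) * G y)]
      rfl

lemma integrableOn_inv_mul_log_rpow {q : ℝ} (hq : q < -1) :
    IntegrableOn (fun y : ℝ => y⁻¹ * Real.log (4 / y) ^ q) (Ioo (0:ℝ) 1) := by
  have h4 : (0:ℝ) < Real.log 4 := Real.log_pos (by norm_num)
  have hexp4 : Real.exp (-Real.log 4) = 4⁻¹ := by
    rw [Real.exp_neg, Real.exp_log] <;> norm_num
  have himg : (fun u : ℝ => 4 * Real.exp (-u)) '' (Ioi (Real.log 4)) = Ioo (0:ℝ) 1 := by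
    ext y
    constructor
    · rintro ⟨u, hu, rfl⟩
      have hu' : Real.log 4 < u := hu
      have h1 : Real.exp (-u) < Real.exp (-Real.log 4) := Real.exp_lt_exp.2 (by linarith)
      rw [hexp4] at h1
      have he : 0 < Real.exp (-u) := Real.exp_pos _
      refine ⟨by positivity, ?_⟩
      show 4 * Real.exp (-u) < 1
      nlinarith
    · rintro ⟨hy0, hy1⟩
      refine ⟨Real.log 4 - Real.log y, ?_, ?_⟩
      · have := Real.log_neg hy0 hy1
        simp only [mem_Ioi]; linarith
      · show 4 * Real.exp (-(Real.log 4 - Real.log y)) = y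
        rw [neg_sub, Real.exp_sub, Real.exp_log hy0, Real.exp_log (by norm_num : (0:ℝ) < 4)]
        field_simp
  have hderiv : ∀ x ∈ Ioi (Real.log 4),
      HasDerivWithinAt (fun u : ℝ => 4 * Real.exp (-u))
        ((fun u : ℝ => -4 * Real.exp (-u)) x) (Ioi (Real.log 4)) x := by
    intro x _
    have h : HasDerivAt (fun u : ℝ => 4 * Real.exp (-u)) (-4 * Real.exp (-x)) x := by
      simpa [mul_comm] using ((Real.hasDerivAt_exp (-x)).comp x ((hasDerivAt_id x).neg)).const_mul 4
    exact h.hasDerivWithinAt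
  have hinj : InjOn (fun u : ℝ => 4 * Real.exp (-u)) (Ioi (Real.log 4)) := by
    intro a _ b _ h
    simp only at h
    have h2 : Real.exp (-a) = Real.exp (-b) := by linarith
    have := Real.exp_eq_exp.1 h2
    linarith
  rw [← himg,
    integrableOn_image_iff_integrableOn_abs_deriv_smul measurableSet_Ioi hderiv hinj]
  refine (integrableOn_Ioi_rpow_of_lt hq h4).congr_fun (fun u hu => ?_) measurableSet_Ioi
  have hupos : 0 < u := lt_trans h4 hu
  have hexp : (0:ℝ) < Real.exp (-u) := Real.exp_pos _
  have hlog : Real.log (4 / (4 * Real.exp (-u))) = u := by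
    rw [show (4:ℝ) / (4 * Real.exp (-u)) = Real.exp u by
      rw [Real.exp_neg]; field_simp]
    exact Real.log_exp u
  show u ^ q = |(-4 * Real.exp (-u))| •
      ((4 * Real.exp (-u))⁻¹ * Real.log (4 / (4 * Real.exp (-u))) ^ q)
  rw [smul_eq_mul, hlog, abs_of_nonpos (by nlinarith),
    show -(-4 * Real.exp (-u)) = 4 * Real.exp (-u) by ring,
    mul_inv_cancel_left₀ (ne_of_gt (by positivity : (0:ℝ) < 4 * Real.exp (-u)))]

lemma key_bound (n : ℕ) (hn : 2 ≤ n) (ε ε' : ℝ) (hε'0 : 0 < ε') (hee : ε' ≤ ε)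
    (he2 : ε' ≤ 1/2) {y : ℝ} (hy : y ∈ Ioo (0:ℝ) 1) :
    y ^ (n - 1) * (((y * Real.log (4 / y))⁻¹) ^ n *
      Real.log (Real.exp 1 + (y * Real.log (4 / y))⁻¹) ^ ((n : ℝ) - 1 - ε))
    ≤ 2 ^ ((n:ℝ) - 1) * (y⁻¹ * Real.log (4 / y) ^ (-1 - ε')) := by
  obtain ⟨hy0, hy1⟩ := hy
  set L := Real.log (4 / y) with hLdef
  have h4y : (4:ℝ) ≤ 4 / y := by
    rw [le_div_iff₀ hy0]; nlinarith
  have hL4 : Real.log 4 ≤ L := Real.log_le_log (by norm_num) h4y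
  have hlog4 : 1 ≤ Real.log 4 := by
    rw [Real.le_log_iff_exp_le (by norm_num : (0:ℝ) < 4)]
    have := Real.exp_one_lt_d9
    linarith
  have hL1 : 1 ≤ L := le_trans hlog4 hL4
  have hL0 : 0 < L := by linarith
  set g := (y * L)⁻¹ with hgdef
  have hg0 : 0 < g := inv_pos.2 (by positivity)
  set b := Real.log (Real.exp 1 + g) with hbdef
  have hb1 : 1 ≤ b := (Real.le_log_iff_exp_le (by positivity)).2 (by linarith)
  have hgy : g ≤ y⁻¹ := by
    rw [hgdef, mul_inv]
    have h1 : L⁻¹ ≤ 1 := inv_le_one_of_one_le₀ hL1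
    have h2 : (0:ℝ) ≤ y⁻¹ := by positivity
    nlinarith
  have hb2L : b ≤ 2 * L := by
    have hgy2 : g * y ^ 2 ≤ y := by
      calc g * y ^ 2 ≤ y⁻¹ * y ^ 2 := by nlinarith
        _ = y := by field_simp
    have h1 : Real.exp 1 + g ≤ (4 / y) ^ 2 := by
      rw [div_pow, le_div_iff₀ (by positivity : (0:ℝ) < y ^ 2)]
      have he : Real.exp 1 ≤ 3 := by
        have := Real.exp_one_lt_d9; linarith
      nlinarith
    calc b ≤ Real.log ((4 / y) ^ 2) := Real.log_le_log (by positivity) h1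
      _ = 2 * L := by rw [Real.log_pow]; push_cast; ring
  have hn2 : (2:ℝ) ≤ (n:ℝ) := by exact_mod_cast hn
  have hT : b ^ ((n:ℝ) - 1 - ε) ≤ 2 ^ ((n:ℝ) - 1) * L ^ ((n:ℝ) - 1 - ε') := by
    calc b ^ ((n:ℝ) - 1 - ε) ≤ b ^ ((n:ℝ) - 1 - ε') :=
          Real.rpow_le_rpow_of_exponent_le hb1 (by linarith)
      _ ≤ (2 * L) ^ ((n:ℝ) - 1 - ε') :=
          Real.rpow_le_rpow (by linarith) hb2L (by linarith)
      _ = 2 ^ ((n:ℝ) - 1 - ε') * L ^ ((n:ℝ) - 1 - ε') :=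
          Real.mul_rpow (by norm_num) (by linarith)
      _ ≤ 2 ^ ((n:ℝ) - 1) * L ^ ((n:ℝ) - 1 - ε') :=
          mul_le_mul_of_nonneg_right
            (Real.rpow_le_rpow_of_exponent_le one_le_two (by linarith))
            (Real.rpow_nonneg hL0.le _)
  have hyn : y ^ (n - 1) * ((y * L)⁻¹) ^ n = y⁻¹ * (L ^ n)⁻¹ := by
    have hn1 : y ^ n = y ^ (n - 1) * y := by
      conv_lhs => rw [show n = n - 1 + 1 from by omega]
      rw [pow_succ]
    rw [mul_inv, mul_pow, inv_pow, inv_pow, hn1]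
    have hyne : y ≠ 0 := ne_of_gt hy0
    have hLne : L ^ n ≠ 0 := pow_ne_zero _ (ne_of_gt hL0)
    field_simp
  have hLn : ((L : ℝ) ^ n)⁻¹ * L ^ ((n:ℝ) - 1 - ε') = L ^ (-1 - ε') := by
    rw [← Real.rpow_natCast L n, ← Real.rpow_neg hL0.le, ← Real.rpow_add hL0]
    congr 1
    ring
  calc y ^ (n - 1) * (((y * L)⁻¹) ^ n * b ^ ((n:ℝ) - 1 - ε))
      = (y ^ (n - 1) * ((y * L)⁻¹) ^ n) * b ^ ((n:ℝ) - 1 - ε) := by ring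
    _ ≤ (y ^ (n - 1) * ((y * L)⁻¹) ^ n) * (2 ^ ((n:ℝ) - 1) * L ^ ((n:ℝ) - 1 - ε')) := by
        apply mul_le_mul_of_nonneg_left hT
        positivity
    _ = 2 ^ ((n:ℝ) - 1) * (y⁻¹ * (((L:ℝ) ^ n)⁻¹ * L ^ ((n:ℝ) - 1 - ε'))) := by
        rw [hyn]; ring
    _ = 2 ^ ((n:ℝ) - 1) * (y⁻¹ * L ^ (-1 - ε')) := by rw [hLn]

theorem frehse_gradient_log_integrability (n : ℕ) (hn : 2 ≤ n) (ε : ℝ) (hε : 0 < ε) :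
    ∫⁻ x in Metric.ball (0 : EuclideanSpace ℝ (Fin n)) 1,
        ENNReal.ofReal
          (((‖x‖ * Real.log (4 / ‖x‖))⁻¹) ^ (n : ℕ) *
            (Real.log (Real.exp 1 + (‖x‖ * Real.log (4 / ‖x‖))⁻¹)) ^ ((n : ℝ) - 1 - ε)) <
      ⊤ := by
  haveI : Nontrivial (EuclideanSpace ℝ (Fin n)) :=
    Module.nontrivial_of_finrank_pos (R := ℝ)
      (by rw [finrank_euclideanSpace_fin]; omega)
  set ε' : ℝ := min ε (1/2) with hε'def
  have hε'0 : 0 < ε' := lt_min hε (by norm_num)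
  have hee : ε' ≤ ε := min_le_left _ _
  have he2 : ε' ≤ 1/2 := min_le_right _ _
  let f : ℝ → ℝ := fun r =>
    ((r * Real.log (4 / r))⁻¹) ^ (n : ℕ) *
      Real.log (Real.exp 1 + (r * Real.log (4 / r))⁻¹) ^ ((n : ℝ) - 1 - ε)
  have hfm : Measurable f := by
    apply Measurable.mul
    · exact ((measurable_id.mul ((Real.measurable_log).comp
        (measurable_const.div measurable_id))).inv.pow_const _)
    · exact (Real.measurable_log.comp (measurable_const.add
        (measurable_id.mul ((Real.measurable_log).comp
          (measurable_const.div measurable_id))).inv)).pow_const _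
  set G : ℝ → ℝ≥0∞ := (Iio (1:ℝ)).indicator (fun r => ENNReal.ofReal (f r)) with hGdef
  have hGm : Measurable G :=
    Measurable.indicator (ENNReal.measurable_ofReal.comp hfm) measurableSet_Iio
  have h1 : (∫⁻ x in Metric.ball (0 : EuclideanSpace ℝ (Fin n)) 1,
        ENNReal.ofReal
          (((‖x‖ * Real.log (4 / ‖x‖))⁻¹) ^ (n : ℕ) *
            (Real.log (Real.exp 1 + (‖x‖ * Real.log (4 / ‖x‖))⁻¹)) ^ ((n : ℝ) - 1 - ε)))
      = ∫⁻ x : EuclideanSpace ℝ (Fin n), G ‖x‖ := by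
    rw [← lintegral_indicator measurableSet_ball]
    refine lintegral_congr fun x => ?_
    by_cases hx : ‖x‖ < 1
    · rw [Set.indicator_of_mem (mem_ball_zero_iff.2 hx), hGdef,
        Set.indicator_of_mem (mem_Iio.2 hx)]
    · rw [Set.indicator_of_notMem (fun h => hx (mem_ball_zero_iff.1 h)), hGdef,
        Set.indicator_of_notMem (fun h => hx (mem_Iio.1 h))]
  rw [h1, lintegral_fun_norm_addHaar' volume G hGm]
  simp only [finrank_euclideanSpace_fin]
  refine ENNReal.mul_lt_top (ENNReal.mul_lt_top (ENNReal.natCast_lt_top _)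
    measure_ball_lt_top) ?_
  have h2 : ∫⁻ y in Ioi (0:ℝ), ENNReal.ofReal (y ^ (n - 1)) * G y
      = ∫⁻ y in Ioo (0:ℝ) 1, ENNReal.ofReal (y ^ (n - 1) * f y) := by
    have hpt : ∀ y : ℝ, ENNReal.ofReal (y ^ (n - 1)) * G y
        = (Iio (1:ℝ)).indicator
            (fun r => ENNReal.ofReal (r ^ (n - 1)) * ENNReal.ofReal (f r)) y := by
      intro y
      by_cases h : y ∈ Iio (1:ℝ)
      · rw [hGdef, Set.indicator_of_mem h, Set.indicator_of_mem h]
      · rw [hGdef, Set.indicator_of_notMem h, Set.indicator_of_notMem h, mul_zero]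
    rw [lintegral_congr hpt, lintegral_indicator measurableSet_Iio,
      Measure.restrict_restrict measurableSet_Iio,
      show Iio (1:ℝ) ∩ Ioi 0 = Ioo 0 1 from by rw [inter_comm]; exact Ioi_inter_Iio]
    refine setLIntegral_congr_fun measurableSet_Ioo (fun y hy => ?_)
    rw [← ENNReal.ofReal_mul (pow_nonneg hy.1.le _)]
  rw [h2]
  have h3 : ∫⁻ y in Ioo (0:ℝ) 1, ENNReal.ofReal (y ^ (n - 1) * f y)
      ≤ ∫⁻ y in Ioo (0:ℝ) 1,
          ENNReal.ofReal (2 ^ ((n:ℝ) - 1) * (y⁻¹ * Real.log (4 / y) ^ (-1 - ε'))) :=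
    setLIntegral_mono' measurableSet_Ioo fun y hy =>
      ENNReal.ofReal_le_ofReal (key_bound n hn ε ε' hε'0 hee he2 hy)
  refine lt_of_le_of_lt h3 ?_
  have h4 : IntegrableOn
      (fun y : ℝ => 2 ^ ((n:ℝ) - 1) * (y⁻¹ * Real.log (4 / y) ^ (-1 - ε')))
      (Ioo (0:ℝ) 1) :=
    (integrableOn_inv_mul_log_rpow (by linarith : (-1 - ε') < -1)).const_mul _
  exact h4.setLIntegral_lt_top
end

section
/- For any integer n ≥ 2 and vectors a, b ∈ ℝᵈ, |a|^{n−2} ≤ |a−b|^{n−2} + |b|^{n−2} + Σ_{k=1}^{n−3} c_k |a−b|^k |b|^{n−2−k} for suitable binomial coefficients c_k, and consequently for any ε > 0 there is a constant C_ε (depending on n and ε) such that (|a|^{n−2}a − |b|^{n−2}b)·a ≤ C_ε |a−b|^n + ε(|a|^n + |b|^n) for all a, b ∈ ℝᵈ. -/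
open Real RealInnerProductSpace

private lemma young1_aux (n : ℕ) (hn : 1 ≤ n) (δ x y : ℝ) (hδ : 0 < δ) (hx : 0 ≤ x) (hy : 0 ≤ y) :
    x * y ^ (n - 1) ≤ δ * y ^ n + (1 / min δ 1) ^ n * x ^ n := by
  set c := min δ 1 with hc
  have hc0 : 0 < c := lt_min hδ one_pos
  have hc1 : c ≤ 1 := min_le_right _ _
  have hcδ : c ≤ δ := min_le_left _ _
  rcases le_total x (c * y) with h | h
  · have h1 : x * y ^ (n - 1) ≤ (c * y) * y ^ (n - 1) := by
      apply mul_le_mul_of_nonneg_right h (pow_nonneg hy _)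
    have h2 : (c * y) * y ^ (n - 1) = c * y ^ n := by
      rw [mul_assoc, ← pow_succ']
      congr 2
      omega
    have h3 : c * y ^ n ≤ δ * y ^ n :=
      mul_le_mul_of_nonneg_right hcδ (pow_nonneg hy _)
    have h4 : 0 ≤ (1 / c) ^ n * x ^ n :=
      mul_nonneg (pow_nonneg (by positivity) _) (pow_nonneg hx _)
    nlinarith
  · have hy' : y ≤ x / c := by
      rw [le_div_iff₀ hc0]
      linarith [mul_comm c y]
    have h1 : y ^ (n - 1) ≤ (x / c) ^ (n - 1) :=
      pow_le_pow_left₀ hy hy' _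
    have h2 : x * y ^ (n - 1) ≤ x * (x / c) ^ (n - 1) :=
      mul_le_mul_of_nonneg_left h1 hx
    have h3 : x * (x / c) ^ (n - 1) = x ^ n / c ^ (n - 1) := by
      rw [div_pow, ← mul_div_assoc, ← pow_succ']
      congr 2
      omega
    have h4 : x ^ n / c ^ (n - 1) ≤ x ^ n / c ^ n := by
      apply div_le_div_of_nonneg_left (pow_nonneg hx _) (by positivity)
      exact pow_le_pow_of_le_one (le_of_lt hc0) hc1 (Nat.sub_le n 1)
    have h5 : x ^ n / c ^ n = (1 / c) ^ n * x ^ n := by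
      rw [div_pow, one_pow]
      ring
    have h6 : 0 ≤ δ * y ^ n := mul_nonneg (le_of_lt hδ) (pow_nonneg hy _)
    linarith

private lemma pow_sub_pow_le_aux (m : ℕ) (x y : ℝ) (hy : 0 ≤ y) (hxy : y ≤ x) :
    x ^ m - y ^ m ≤ m * (x - y) * x ^ (m - 1) := by
  induction m with
  | zero => simp
  | succ k ih =>
      have hx : 0 ≤ x := le_trans hy hxy
      rcases Nat.eq_zero_or_pos k with hk | hk
      · subst hk; simp
      · have hxk : x ^ k - y ^ k ≤ k * (x - y) * x ^ (k - 1) := ih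
        have hpow : x * x ^ (k - 1) = x ^ k := by
          rw [← pow_succ']
          congr 1
          omega
        have hyk : y ^ k ≤ x ^ k := pow_le_pow_left₀ hy hxy _
        have e1 : x ^ (k + 1) - y ^ (k + 1) = x * (x ^ k - y ^ k) + y ^ k * (x - y) := by
          ring
        have e2 : x * (x ^ k - y ^ k) ≤ x * (k * (x - y) * x ^ (k - 1)) :=
          mul_le_mul_of_nonneg_left hxk hx
        have e3 : x * (k * (x - y) * x ^ (k - 1)) = k * (x - y) * x ^ k := by
          rw [← hpow]; ring
        have e4 : y ^ k * (x - y) ≤ x ^ k * (x - y) :=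
          mul_le_mul_of_nonneg_right hyk (by linarith)
        have : ((k : ℝ) + 1) * (x - y) * x ^ (k + 1 - 1) = k * (x - y) * x ^ k + x ^ k * (x - y) := by
          simp only [Nat.add_sub_cancel]
          ring
        push_cast
        rw [this] at *
        linarith [e1, e2, e4]

theorem nLaplace_vector_field_estimate (n d : ℕ) (hn : 2 ≤ n) :
    (∀ a b : EuclideanSpace ℝ (Fin d),
      ‖a‖ ^ (n - 2) ≤ ‖a - b‖ ^ (n - 2) + ‖b‖ ^ (n - 2) +
        ∑ k ∈ Finset.Icc 1 (n - 3),
          ((n - 2).choose k : ℝ) * ‖a - b‖ ^ k * ‖b‖ ^ (n - 2 - k)) ∧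
    ∀ ε : ℝ, 0 < ε → ∃ C : ℝ, 0 < C ∧
      ∀ a b : EuclideanSpace ℝ (Fin d),
        ⟪‖a‖ ^ (n - 2) • a - ‖b‖ ^ (n - 2) • b, a⟫ ≤
          C * ‖a - b‖ ^ n + ε * (‖a‖ ^ n + ‖b‖ ^ n) := by
  constructor
  · -- Part 1: binomial expansion of the triangle inequality
    intro a b
    set m := n - 2 with hm
    set h := ‖a - b‖
    set B := ‖b‖
    have hh : (0:ℝ) ≤ h := norm_nonneg _
    have hB : (0:ℝ) ≤ B := norm_nonneg _
    have htri : ‖a‖ ≤ h + B := by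
      calc ‖a‖ = ‖(a - b) + b‖ := by rw [sub_add_cancel]
      _ ≤ h + B := norm_add_le _ _
    have h1 : ‖a‖ ^ m ≤ (h + B) ^ m := pow_le_pow_left₀ (norm_nonneg _) htri _
    have h2 : (h + B) ^ m = ∑ k ∈ Finset.range (m + 1), h ^ k * B ^ (m - k) * (m.choose k : ℝ) :=
      add_pow h B m
    have hn3 : n - 3 = m - 1 := by omega
    rw [hn3]
    rcases Nat.eq_zero_or_pos m with hm0 | hm1
    · rw [hm0]
      simp
    · set f : ℕ → ℝ := fun k => h ^ k * B ^ (m - k) * (m.choose k : ℝ) with hf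
      have e1 : ∑ k ∈ Finset.range (m + 1), f k = (∑ k ∈ Finset.Ico 0 m, f k) + f m := by
        rw [Finset.range_eq_Ico, Finset.sum_Ico_succ_top (by omega)]
      have e2 : ∑ k ∈ Finset.Ico 0 m, f k = f 0 + ∑ k ∈ Finset.Ico 1 m, f k :=
        Finset.sum_eq_sum_Ico_succ_bot hm1 f
      have e3 : f 0 = B ^ m := by simp [hf]
      have e4 : f m = h ^ m := by simp [hf]
      have e5 : Finset.Ico 1 m = Finset.Icc 1 (m - 1) := by
        rw [← Finset.Ico_add_one_right_eq_Icc]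
        congr 1
        omega
      have e6 : ∑ k ∈ Finset.Ico 1 m, f k
          = ∑ k ∈ Finset.Icc 1 (m - 1), (m.choose k : ℝ) * h ^ k * B ^ (m - k) := by
        rw [e5]
        exact Finset.sum_congr rfl (fun k _ => by rw [hf]; ring)
      rw [h2, e1, e2, e3, e4, e6] at h1
      linarith
  · -- Part 2: the vector field estimate
    intro ε hε
    set m := n - 2 with hm
    set δ : ℝ := ε / ((n - 1 : ℕ) * 2 ^ n) with hδdef
    have hn1 : (1:ℝ) ≤ ((n - 1 : ℕ) : ℝ) := by
      have : 1 ≤ n - 1 := by omega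
      exact_mod_cast this
    have hδ : 0 < δ := by
      apply div_pos hε
      positivity
    refine ⟨((n - 1 : ℕ) : ℝ) * (1 / min δ 1) ^ n, by positivity, ?_⟩
    intro a b
    set A := ‖a‖
    set B := ‖b‖
    set h := ‖a - b‖
    have hA : (0:ℝ) ≤ A := norm_nonneg _
    have hB : (0:ℝ) ≤ B := norm_nonneg _
    have hh : (0:ℝ) ≤ h := norm_nonneg _
    set M := A + B with hM
    have hM0 : (0:ℝ) ≤ M := by positivity
    have key1 : ⟪(A ^ m) • a - (B ^ m) • b, a⟫ =
        A ^ m * ⟪a - b, a⟫ + (A ^ m - B ^ m) * ⟪b, a⟫ := by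
      rw [inner_sub_left, real_inner_smul_left, real_inner_smul_left, inner_sub_left]
      ring
    have hb1 : A ^ m * ⟪a - b, a⟫ ≤ A ^ m * (h * A) :=
      mul_le_mul_of_nonneg_left (real_inner_le_norm _ _) (pow_nonneg hA _)
    have hdiff : |A ^ m - B ^ m| ≤ (m : ℝ) * h * M ^ (m - 1) := by
      have hAB : |A - B| ≤ h := abs_norm_sub_norm_le a b
      rcases le_total B A with hle | hle
      · have := pow_sub_pow_le_aux m A B hB hle
        have hAM : A ≤ M := by simp [hM]; linarith
        have h1 : A ^ (m - 1) ≤ M ^ (m - 1) := pow_le_pow_left₀ hA hAM _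
        rw [abs_of_nonneg (by nlinarith [pow_le_pow_left₀ hB hle m] : (0:ℝ) ≤ A ^ m - B ^ m)]
        have h2 : (m:ℝ) * (A - B) * A ^ (m-1) ≤ (m:ℝ) * h * M ^ (m-1) := by
          have hABh : A - B ≤ h := by
            have := le_abs_self (A - B); linarith
          apply mul_le_mul
          · apply mul_le_mul_of_nonneg_left hABh (Nat.cast_nonneg _)
          · exact h1
          · positivity
          · positivity
        linarith
      · have := pow_sub_pow_le_aux m B A hA hle
        have hBM : B ≤ M := by simp [hM]; linarith
        have h1 : B ^ (m - 1) ≤ M ^ (m - 1) := pow_le_pow_left₀ hB hBM _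
        rw [abs_sub_comm,
          abs_of_nonneg (by nlinarith [pow_le_pow_left₀ hA hle m] : (0:ℝ) ≤ B ^ m - A ^ m)]
        have h2 : (m:ℝ) * (B - A) * B ^ (m-1) ≤ (m:ℝ) * h * M ^ (m-1) := by
          have hABh : B - A ≤ h := by
            have := neg_abs_le (A - B); linarith
          apply mul_le_mul
          · apply mul_le_mul_of_nonneg_left hABh (Nat.cast_nonneg _)
          · exact h1
          · positivity
          · positivity
        linarith
    have hb2 : (A ^ m - B ^ m) * ⟪b, a⟫ ≤ ((m : ℝ) * h * M ^ (m - 1)) * (B * A) := by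
      calc (A ^ m - B ^ m) * ⟪b, a⟫ ≤ |(A ^ m - B ^ m) * ⟪b, a⟫| := le_abs_self _
      _ = |A ^ m - B ^ m| * |⟪b, a⟫| := abs_mul _ _
      _ ≤ ((m : ℝ) * h * M ^ (m - 1)) * (B * A) := by
          apply mul_le_mul hdiff (abs_real_inner_le_norm _ _) (abs_nonneg _)
          positivity
    have hAM : A ≤ M := by simp [hM]; linarith
    have hBM : B ≤ M := by simp [hM]; linarith
    have hc1 : A ^ m * (h * A) ≤ h * M ^ (n - 1) := by
      have e : M ^ (n - 1) = M ^ m * M := by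
        rw [← pow_succ]
        congr 1
        omega
      rw [e]
      have := pow_le_pow_left₀ hA hAM m
      calc A ^ m * (h * A) = h * (A ^ m * A) := by ring
      _ ≤ h * (M ^ m * M) := by
          apply mul_le_mul_of_nonneg_left _ hh
          exact mul_le_mul this hAM hA (pow_nonneg hM0 _)
    have hc2 : ((m : ℝ) * h * M ^ (m - 1)) * (B * A) ≤ (m : ℝ) * (h * M ^ (n - 1)) := by
      rcases Nat.eq_zero_or_pos m with hm0 | hm1
      · rw [hm0]; simp
      · have e : M ^ (n - 1) = M ^ (m - 1) * M * M := by
          rw [← pow_succ, ← pow_succ]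
          congr 1
          omega
        rw [e]
        have hba : B * A ≤ M * M := mul_le_mul hBM hAM hA hM0
        calc ((m : ℝ) * h * M ^ (m - 1)) * (B * A)
            ≤ ((m : ℝ) * h * M ^ (m - 1)) * (M * M) := by
              apply mul_le_mul_of_nonneg_left hba
              positivity
        _ = (m : ℝ) * (h * (M ^ (m-1) * M * M)) := by ring
    have total : ⟪(A ^ m) • a - (B ^ m) • b, a⟫ ≤ ((n - 1 : ℕ) : ℝ) * (h * M ^ (n - 1)) := by
      rw [key1]
      have : ((m : ℝ) + 1) = ((n - 1 : ℕ) : ℝ) := by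
        rw [hm]
        push_cast [Nat.cast_sub (by omega : 1 ≤ n), Nat.cast_sub (by omega : 2 ≤ n)]
        ring
      have e2 : ((m : ℝ) + 1) * (h * M ^ (n - 1)) = ((n - 1 : ℕ) : ℝ) * (h * M ^ (n - 1)) := by
        rw [this]
      linarith [hb1, hb2, hc1, hc2]
    have hy := young1_aux n (by omega) δ h M hδ hh hM0
    have hMn : M ^ n ≤ 2 ^ n * (A ^ n + B ^ n) := by
      have h1 : M ≤ 2 * max A B := by
        rcases le_total A B with hle | hle
        · simp [hM, max_eq_right hle]; linarith
        · simp [hM, max_eq_left hle]; linarith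
      have h2 : M ^ n ≤ (2 * max A B) ^ n := pow_le_pow_left₀ hM0 h1 _
      have h3 : (2 * max A B) ^ n = 2 ^ n * (max A B) ^ n := by rw [mul_pow]
      have h4 : (max A B) ^ n ≤ A ^ n + B ^ n := by
        rcases max_cases A B with ⟨he, _⟩ | ⟨he, _⟩ <;> rw [he]
        · linarith [pow_nonneg hB n]
        · linarith [pow_nonneg hA n]
      have h5 : 2 ^ n * (max A B) ^ n ≤ 2 ^ n * (A ^ n + B ^ n) :=
        mul_le_mul_of_nonneg_left h4 (by positivity)
      linarith [h2, h3.le, h3.ge]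
    have hK : ((n - 1 : ℕ) : ℝ) * 2 ^ n ≠ 0 := by positivity
    have hδε : ((n - 1 : ℕ) : ℝ) * (δ * (2 ^ n * (A ^ n + B ^ n))) = ε * (A ^ n + B ^ n) := by
      have e : ((n - 1 : ℕ) : ℝ) * (δ * (2 ^ n * (A ^ n + B ^ n)))
          = δ * (((n - 1 : ℕ) : ℝ) * 2 ^ n) * (A ^ n + B ^ n) := by ring
      rw [e, hδdef, div_mul_cancel₀ _ hK]
    calc ⟪(A ^ m) • a - (B ^ m) • b, a⟫ ≤ ((n - 1 : ℕ) : ℝ) * (h * M ^ (n - 1)) := total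
    _ ≤ ((n - 1 : ℕ) : ℝ) * (δ * M ^ n + (1 / min δ 1) ^ n * h ^ n) := by
        apply mul_le_mul_of_nonneg_left hy (by linarith)
    _ ≤ ((n - 1 : ℕ) : ℝ) * (δ * (2 ^ n * (A ^ n + B ^ n)) + (1 / min δ 1) ^ n * h ^ n) := by
        apply mul_le_mul_of_nonneg_left _ (by linarith)
        have : δ * M ^ n ≤ δ * (2 ^ n * (A ^ n + B ^ n)) :=
          mul_le_mul_of_nonneg_left hMn (le_of_lt hδ)
        linarith
    _ = ((n - 1 : ℕ) : ℝ) * (1 / min δ 1) ^ n * h ^ n + ε * (A ^ n + B ^ n) := by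
        rw [mul_add, hδε]
        ring
end
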